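/- Let T_l be a nonsingular l×l matrix over GF(2) and let T_L = T₂⊗T_l = [[T_l,0],[T_l,T_l]]. Then for every 0 ≤ i ≤ l−1 the following identities of polynomials (say in ℤ[z]) hold between the erasure polynomials of T_L and of T_l: p_i^{T_L}(z) = p_i^{T_l}(2z − z²) and p_{l+i}^{T_L}(z) = p_i^{T_l}(z²). -/

import Mathlib

open Matrix

/-- Kronecker product of square matrices over GF(2), with row/column index
pairs ordered lexicographically: `(a, b)` corresponds to index `a * n + b`. -/
noncomputable def kron {m n : ℕ} (A : Matrix (Fin m) (Fin m) (ZMod 2))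
    (B : Matrix (Fin n) (Fin n) (ZMod 2)) :
    Matrix (Fin (m * n)) (Fin (m * n)) (ZMod 2) :=
  Matrix.reindex finProdFinEquiv finProdFinEquiv (Matrix.kroneckerMap (· * ·) A B)

/-- The matrix `T₂ = [[1,0],[1,1]]` over GF(2). -/
def Ttwo : Matrix (Fin 2) (Fin 2) (ZMod 2) := !![1, 0; 1, 1]

/-- An erasure pattern `e : Fin l → Bool` (where `e j = true` means the `j`-th
copy of the channel is erased) kills bit channel `i` of the kernel `T` if the
vector `Y_{l-i} = (1,0,…,0)ᵀ` of length `l - i` (indexed by rows `r` with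
`i ≤ r`) is not in the `𝔽₂`-linear span of the columns of the submatrix
`T[i : l-1]` at the non-erased positions. -/
def Kills {l : ℕ} (T : Matrix (Fin l) (Fin l) (ZMod 2)) (i : Fin l)
    (e : Fin l → Bool) : Prop :=
  (fun r : {r : Fin l // i ≤ r} => if r.val = i then (1 : ZMod 2) else 0) ∉
    Submodule.span (ZMod 2)
      {w : {r : Fin l // i ≤ r} → ZMod 2 | ∃ j : Fin l, e j = false ∧ w = fun r => T r.val j}

/-- `E_{i,w}(T)`: the number of erasure patterns of weight `w` (i.e. with
exactly `w` erased positions) that kill bit channel `i` of `T`. -/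
noncomputable def numKilling {l : ℕ} (T : Matrix (Fin l) (Fin l) (ZMod 2))
    (i : Fin l) (w : ℕ) : ℕ :=
  Nat.card {e : Fin l → Bool //
    (Finset.univ.filter fun j => e j = true).card = w ∧ Kills T i e}

/-- The erasure polynomial `p_i^T(z) = Σ_w E_{i,w}(T) z^w (1-z)^{l-w} ∈ ℤ[z]`
of bit channel `i` of `T`. -/
noncomputable def erasurePoly {l : ℕ} (T : Matrix (Fin l) (Fin l) (ZMod 2))
    (i : Fin l) : Polynomial ℤ :=
  ∑ w ∈ Finset.range (l + 1),
    (numKilling T i w : Polynomial ℤ) * Polynomial.X ^ w * (1 - Polynomial.X) ^ (l - w)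

/-!
Index the bit channels of `T₂ ⊗ T` by `(a, d) ∈ Fin 2 × Fin l`, so that the columns at
`(0, d)` and `(1, d)` are `(T_d, T_d)` and `(0, T_d)`. A combination `c = (c₀, c₁)` of
non-erased columns decodes channel `(1, i)` iff `c₀ + c₁` decodes channel `i` of `T`; and it
decodes channel `(0, i)` iff `c₀` decodes channel `i` and `T (c₀ + c₁) = 0`, i.e. (as `T` is
invertible and we are in characteristic 2) `c₀ = c₁`. Hence channel `(1, i)` is killed iff
channel `i` of `T` is killed by the pattern `e₀ ∧ e₁`, and channel `(0, i)` iff it is killed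
by `e₀ ∨ e₁`. The erasure polynomial evaluated at `z` is the probability that i.i.d. erasures of
probability `z` kill the channel; the AND (resp. OR) of two independent such erasures is an
erasure of probability `z²` (resp. `2z - z²`).
-/

open Finset Polynomial

theorem Submodule.mem_span_setOf_exists_eq_iff {R M ι : Type*} [Semiring R] [AddCommMonoid M]
    [Module R M] [Fintype ι] (p : ι → Prop) (v : ι → M) (x : M) :
    x ∈ Submodule.span R {w | ∃ j, p j ∧ w = v j} ↔
      ∃ c : ι → R, (∀ j, ¬ p j → c j = 0) ∧ ∑ j, c j • v j = x := by
  classical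
  have hset : {w | ∃ j, p j ∧ w = v j} = Set.range fun j : {j // p j} => v j := by
    ext w; simp [eq_comm]
  rw [hset, Submodule.mem_span_range_iff_exists_fun]
  constructor
  · rintro ⟨c, rfl⟩
    refine ⟨fun j => if h : p j then c ⟨j, h⟩ else 0, fun j hj => dif_neg hj, ?_⟩
    rw [← Fintype.sum_subtype_add_sum_subtype p, Fintype.sum_eq_zero (α := {j // ¬ p j}) _
      fun j => by simp only [dif_neg j.2, zero_smul], add_zero]
    exact Finset.sum_congr rfl fun j _ => by simp only [dif_pos j.2]
  · rintro ⟨c, hc, rfl⟩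
    refine ⟨fun j => c j, ?_⟩
    rw [← Fintype.sum_subtype_add_sum_subtype p, Fintype.sum_eq_zero (α := {j // ¬ p j}) _
      fun j => by rw [hc j j.2, zero_smul], add_zero]

theorem Finset.sum_filter_comp_prod {ι α β R : Type*} [Fintype ι] [DecidableEq ι] [Fintype α]
    [Fintype β] [DecidableEq β] [CommSemiring R] (P : (ι → β) → Prop) [DecidablePred P]
    (g : α → β) (F : α → R) :
    ∑ p : ι → α with P (g ∘ p), ∏ i, F (p i) =
      ∑ e : ι → β with P e, ∏ i, ∑ a with g a = e i, F a := by
  rw [← Finset.sum_fiberwise_of_maps_to (g := (g ∘ ·)) (t := {e | P e})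
    fun p hp => by simpa using hp]
  refine Finset.sum_congr rfl fun e he => ?_
  rw [Finset.prod_univ_sum]
  refine Finset.sum_congr ?_ fun _ _ => rfl
  ext p
  simp only [mem_filter, mem_univ, true_and, Fintype.mem_piFinset, funext_iff, Function.comp_apply]
  exact and_iff_right_of_imp fun h => (funext h : g ∘ p = e) ▸ (mem_filter.1 he).2

theorem finProdFinEquiv_le_finProdFinEquiv_iff {m n : ℕ} {a a' : Fin m} {b b' : Fin n} :
    finProdFinEquiv (a, b) ≤ finProdFinEquiv (a', b') ↔ a < a' ∨ a = a' ∧ b ≤ b' := by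
  simp only [Fin.le_def, Fin.lt_def, Fin.ext_iff, finProdFinEquiv_apply_val]
  rcases lt_trichotomy (a : ℕ) a' with h | h | h
  · have := Nat.mul_le_mul_left n (Nat.succ_le_of_lt h)
    simp only [h, true_or, iff_true]
    nlinarith [b.isLt, b'.isLt]
  · simp [h]
  · have := Nat.mul_le_mul_left n (Nat.succ_le_of_lt h)
    simp only [h.ne', not_lt_of_gt h, false_and, or_self, iff_false, not_le]
    rw [Nat.mul_succ] at this
    linarith [b.isLt, b'.isLt]

def erasureWeight {R : Type*} [Ring R] (s : R) (b : Bool) : R := if b then s else 1 - s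

theorem prod_erasureWeight {R ι : Type*} [CommRing R] [Fintype ι] [DecidableEq ι] (s : R)
    (e : ι → Bool) :
    ∏ j, erasureWeight s (e j) = s ^ #{j | e j} * (1 - s) ^ (Fintype.card ι - #{j | e j}) := by
  rw [← card_compl, Finset.compl_filter]
  simp only [erasureWeight, Finset.prod_ite, Finset.prod_const]

open scoped Classical in
theorem erasurePoly_comp_eq_sum {l : ℕ} (T : Matrix (Fin l) (Fin l) (ZMod 2)) (i : Fin l)
    (s : ℤ[X]) :
    (erasurePoly T i).comp s = ∑ e with Kills T i e, ∏ j, erasureWeight s (e j) := by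
  simp only [prod_erasureWeight, Fintype.card_fin]
  rw [← Finset.sum_fiberwise_of_maps_to (g := fun e : Fin l → Bool => #{j | e j})
    (t := range (l + 1)) fun e _ =>
      mem_range_succ_iff.2 ((card_le_univ _).trans_eq (Fintype.card_fin l))]
  simp only [erasurePoly, numKilling, Nat.card_eq_fintype_card, Fintype.card_subtype,
    Polynomial.sum_comp, mul_comp, pow_comp, natCast_comp, X_comp, sub_comp, one_comp]
  refine Finset.sum_congr rfl fun w _ => ?_
  rw [filter_filter, Finset.sum_congr rfl fun e he => by rw [(mem_filter.1 he).2.2], sum_const,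
    nsmul_eq_mul, mul_assoc]
  simp only [and_comm]

theorem kills_iff_not_exists {l : ℕ} (T : Matrix (Fin l) (Fin l) (ZMod 2)) (i : Fin l)
    (e : Fin l → Bool) :
    Kills T i e ↔ ¬ ∃ c : Fin l → ZMod 2, (∀ j, e j = true → c j = 0) ∧
      ∀ r, i ≤ r → (T *ᵥ c) r = if r = i then 1 else 0 := by
  rw [Kills, Submodule.mem_span_setOf_exists_eq_iff]
  simp only [Bool.not_eq_false, funext_iff, Finset.sum_apply, Subtype.forall, Pi.smul_apply,
    smul_eq_mul, mulVec, dotProduct, mul_comm (T _ _)]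

theorem kron_mulVec_finProdFinEquiv {m n : ℕ} (A : Matrix (Fin m) (Fin m) (ZMod 2))
    (B : Matrix (Fin n) (Fin n) (ZMod 2)) (c : Fin (m * n) → ZMod 2) (a : Fin m) (b : Fin n) :
    (kron A B *ᵥ c) (finProdFinEquiv (a, b)) =
      ∑ a', A a a' * (B *ᵥ fun d => c (finProdFinEquiv (a', d))) b := by
  simp only [mulVec, dotProduct, kron, ← Equiv.sum_comp finProdFinEquiv, Fintype.sum_prod_type,
    reindex_apply, submatrix_apply, Equiv.symm_apply_apply, kroneckerMap_apply, Finset.mul_sum,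
    mul_assoc]

section Blocks

variable {l : ℕ}

theorem forall_fin_two_mul_iff {P : Fin (2 * l) → Prop} :
    (∀ r, P r) ↔ (∀ b, P (finProdFinEquiv (0, b))) ∧ ∀ b, P (finProdFinEquiv (1, b)) := by
  rw [← finProdFinEquiv.forall_congr_right]
  simp only [Prod.forall, Fin.forall_fin_two]

theorem prod_fin_two_mul {M : Type*} [CommMonoid M] (f : Fin (2 * l) → M) :
    ∏ j, f j = ∏ d, f (finProdFinEquiv (0, d)) * f (finProdFinEquiv (1, d)) := by
  rw [← finProdFinEquiv.prod_comp, Fintype.prod_prod_type_right]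
  simp only [Fin.prod_univ_two]

def blockEquiv (α : Type*) : (Fin (2 * l) → α) ≃ (Fin l → α × α) where
  toFun e d := (e (finProdFinEquiv (0, d)), e (finProdFinEquiv (1, d)))
  invFun p j := ![(p (finProdFinEquiv.symm j).2).1, (p (finProdFinEquiv.symm j).2).2]
    (finProdFinEquiv.symm j).1
  left_inv e := by
    funext j
    obtain ⟨⟨a, d⟩, rfl⟩ := finProdFinEquiv.surjective j
    fin_cases a <;> simp
  right_inv p := by
    funext d
    simp

@[simp]
theorem blockEquiv_apply {α : Type*} (e : Fin (2 * l) → α) (d : Fin l) :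
    blockEquiv α e d = (e (finProdFinEquiv (0, d)), e (finProdFinEquiv (1, d))) :=
  rfl

@[simp]
theorem blockEquiv_symm_apply_zero {α : Type*} (p : Fin l → α × α) (d : Fin l) :
    (blockEquiv α).symm p (finProdFinEquiv (0, d)) = (p d).1 := by
  simp only [blockEquiv, Equiv.coe_fn_symm_mk, Equiv.symm_apply_apply]
  rfl

@[simp]
theorem blockEquiv_symm_apply_one {α : Type*} (p : Fin l → α × α) (d : Fin l) :
    (blockEquiv α).symm p (finProdFinEquiv (1, d)) = (p d).2 := by
  simp only [blockEquiv, Equiv.coe_fn_symm_mk, Equiv.symm_apply_apply]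
  rfl

variable (T : Matrix (Fin l) (Fin l) (ZMod 2))

theorem kron_Ttwo_mulVec_zero (c : Fin (2 * l) → ZMod 2) (b : Fin l) :
    (kron Ttwo T *ᵥ c) (finProdFinEquiv (0, b)) =
      (T *ᵥ fun d => c (finProdFinEquiv (0, d))) b := by
  simp [kron_mulVec_finProdFinEquiv, Fin.sum_univ_two, Ttwo]

theorem kron_Ttwo_mulVec_one (c : Fin (2 * l) → ZMod 2) (b : Fin l) :
    (kron Ttwo T *ᵥ c) (finProdFinEquiv (1, b)) =
      (T *ᵥ fun d => c (finProdFinEquiv (0, d)) + c (finProdFinEquiv (1, d))) b := by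
  simp [kron_mulVec_finProdFinEquiv, Fin.sum_univ_two, Ttwo, ← Pi.add_def, mulVec_add]

end Blocks

section Kills

variable {l : ℕ} (T : Matrix (Fin l) (Fin l) (ZMod 2))

theorem kills_kron_Ttwo_bottom_iff (i : Fin l) (e : Fin (2 * l) → Bool) :
    Kills (kron Ttwo T) (finProdFinEquiv (1, i)) e ↔
      Kills T i fun d => e (finProdFinEquiv (0, d)) && e (finProdFinEquiv (1, d)) := by
  rw [kills_iff_not_exists, kills_iff_not_exists, not_iff_not]
  simp only [forall_fin_two_mul_iff, Fin.isValue, finProdFinEquiv_le_finProdFinEquiv_iff,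
    not_lt_zero, one_ne_zero, false_and, or_self, EmbeddingLike.apply_eq_iff_eq, Prod.mk.injEq,
    zero_ne_one, ↓reduceIte, IsEmpty.forall_iff, implies_true, lt_self_iff_false, true_and,
    false_or, kron_Ttwo_mulVec_one, Bool.and_eq_true, and_imp]
  constructor
  · rintro ⟨c, ⟨hc₀, hc₁⟩, hrow⟩
    exact ⟨_, fun d h₀ h₁ => by rw [hc₀ d h₀, hc₁ d h₁, add_zero], hrow⟩
  · rintro ⟨c, hc, hrow⟩
    -- put `c d` on whichever of the two copies of position `d` is not erased
    refine ⟨(blockEquiv _).symm fun d => if e (finProdFinEquiv (0, d)) then (0, c d) else (c d, 0),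
      ⟨fun d h₀ => by simp [h₀], fun d h₁ => ?_⟩, fun b hb => ?_⟩
    · cases h₀ : e (finProdFinEquiv (0, d)) with
      | false => simp [h₀]
      | true => simp [h₀, hc d h₀ h₁]
    · convert hrow b hb using 3 with d
      cases h₀ : e (finProdFinEquiv (0, d)) <;> simp [h₀]

theorem kills_kron_Ttwo_top_iff (hT : IsUnit T) (i : Fin l) (e : Fin (2 * l) → Bool) :
    Kills (kron Ttwo T) (finProdFinEquiv (0, i)) e ↔
      Kills T i fun d => e (finProdFinEquiv (0, d)) || e (finProdFinEquiv (1, d)) := by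
  rw [kills_iff_not_exists, kills_iff_not_exists, not_iff_not]
  simp only [forall_fin_two_mul_iff, Fin.isValue, finProdFinEquiv_le_finProdFinEquiv_iff,
    lt_self_iff_false, true_and, false_or, kron_Ttwo_mulVec_zero, EmbeddingLike.apply_eq_iff_eq,
    Prod.mk.injEq, zero_lt_one, zero_ne_one, false_and, or_false, kron_Ttwo_mulVec_one,
    one_ne_zero, ↓reduceIte, forall_const, Bool.or_eq_true]
  constructor
  · rintro ⟨c, ⟨hc₀, hc₁⟩, hrow, hker⟩
    have hsum : (fun d => c (finProdFinEquiv (0, d)) + c (finProdFinEquiv (1, d))) = 0 :=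
      mulVec_injective_iff_isUnit.2 hT (by rw [mulVec_zero]; exact funext hker)
    have hsame (d : Fin l) : c (finProdFinEquiv (0, d)) = c (finProdFinEquiv (1, d)) :=
      CharTwo.add_eq_zero.1 (congrFun hsum d)
    exact ⟨_, fun d h => h.elim (hc₀ d) fun h₁ => (hsame d).trans (hc₁ d h₁), hrow⟩
  · rintro ⟨c, hc, hrow⟩
    refine ⟨(blockEquiv _).symm fun d => (c d, c d), ⟨?_, ?_⟩, by simpa using hrow, fun b => ?_⟩
    · simpa using fun d h₀ => hc d (Or.inl h₀)
    · simpa using fun d h₁ => hc d (Or.inr h₁)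
    · simp [CharTwo.add_self_eq_zero, ← Pi.zero_def]

end Kills

theorem sum_or_erasureWeight {R : Type*} [CommRing R] (x : R) (b : Bool) :
    ∑ q : Bool × Bool with (q.1 || q.2) = b, erasureWeight x q.1 * erasureWeight x q.2 =
      erasureWeight (2 * x - x ^ 2) b := by
  cases b <;> simp [Finset.sum_filter, Fintype.sum_prod_type, erasureWeight] <;> ring

theorem sum_and_erasureWeight {R : Type*} [CommRing R] (x : R) (b : Bool) :
    ∑ q : Bool × Bool with (q.1 && q.2) = b, erasureWeight x q.1 * erasureWeight x q.2 =
      erasureWeight (x ^ 2) b := by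
  cases b <;> simp [Finset.sum_filter, Fintype.sum_prod_type, erasureWeight] <;> ring

open scoped Classical in
theorem erasurePoly_kron_Ttwo_eq_comp {l : ℕ} (T : Matrix (Fin l) (Fin l) (ZMod 2))
    (k : Fin (2 * l)) (i : Fin l) (op : Bool → Bool → Bool) (s : ℤ[X])
    (hk : ∀ e, Kills (kron Ttwo T) k e ↔
      Kills T i fun d => op (e (finProdFinEquiv (0, d))) (e (finProdFinEquiv (1, d))))
    (hs : ∀ b, ∑ q : Bool × Bool with op q.1 q.2 = b,
      erasureWeight X q.1 * erasureWeight X q.2 = erasureWeight s b) :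
    erasurePoly (kron Ttwo T) k = (erasurePoly T i).comp s := by
  rw [← comp_X (p := erasurePoly (kron Ttwo T) k), erasurePoly_comp_eq_sum,
    erasurePoly_comp_eq_sum]
  calc ∑ e with Kills (kron Ttwo T) k e, ∏ j, erasureWeight X (e j)
      = ∑ p : Fin l → Bool × Bool with Kills T i ((fun q => op q.1 q.2) ∘ p),
          ∏ d, erasureWeight X (p d).1 * erasureWeight X (p d).2 :=
        Finset.sum_equiv (blockEquiv Bool) (by simp [hk, Function.comp_def])
          (by simp [prod_fin_two_mul])
    _ = ∑ e with Kills T i e, ∏ d, ∑ q : Bool × Bool with op q.1 q.2 = e d,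
          erasureWeight X q.1 * erasureWeight X q.2 := by
        exact Finset.sum_filter_comp_prod (Kills T i) (fun q : Bool × Bool => op q.1 q.2)
          (fun q => erasureWeight X q.1 * erasureWeight X q.2)
    _ = _ := by simp only [hs]

theorem erasurePoly_kron_Ttwo {l : ℕ} (T : Matrix (Fin l) (Fin l) (ZMod 2))
    (hT : IsUnit T) (i : Fin l) :
    erasurePoly (kron Ttwo T) ⟨(i : ℕ), by have := i.isLt; omega⟩ =
        (erasurePoly T i).comp (2 * Polynomial.X - Polynomial.X ^ 2) ∧
      erasurePoly (kron Ttwo T) ⟨l + (i : ℕ), by have := i.isLt; omega⟩ =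
        (erasurePoly T i).comp (Polynomial.X ^ 2) := by
  have htop : (⟨i, by omega⟩ : Fin (2 * l)) = finProdFinEquiv (0, i) := Fin.ext (by simp)
  have hbottom : (⟨l + i, by omega⟩ : Fin (2 * l)) = finProdFinEquiv (1, i) :=
    Fin.ext (by simp [add_comm])
  rw [htop, hbottom]
  exact ⟨erasurePoly_kron_Ttwo_eq_comp T _ i _ _ (kills_kron_Ttwo_top_iff T hT i)
      (sum_or_erasureWeight X),
    erasurePoly_kron_Ttwo_eq_comp T _ i _ _ (kills_kron_Ttwo_bottom_iff T i)
      (sum_and_erasureWeight X)⟩
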